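/- For each fixed t > 0, the function F^μ(t, z) = Φ((z − μt)/√t) − e^{2μz} Φ((−z − μt)/√t), defined for z ≥ 0, satisfies F^μ(t, 0) = 0, is nondecreasing in z, and tends to 1 as z → ∞. -/

import Mathlib

open Set Filter

/-- Standard normal CDF. -/
noncomputable def stdNormalCDF (x : ℝ) : ℝ :=
  ∫ t in Iic x, (Real.sqrt (2 * Real.pi))⁻¹ * Real.exp (-(t ^ 2) / 2)

/-- The CDF of the maximum of Brownian motion with drift μ over [0, t]. -/
noncomputable def Fmu (μ t z : ℝ) : ℝ :=
  stdNormalCDF ((z - μ * t) / Real.sqrt t)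
    - Real.exp (2 * μ * z) * stdNormalCDF ((-z - μ * t) / Real.sqrt t)

/-!
Differentiating, and using the reflection identity
`e^{2μz} φ((-z - μt)/√t) = φ((z - μt)/√t)`, the derivative of `F^μ(t, ·)` is
`(2 e^{2μz} / √t) (φ(b) - μ√t Φ(b))` with `b = (-z - μt)/√t`. For `z ≥ 0` we have `μ√t ≤ -b`,
so it is nonnegative by the Mills-ratio bound `-b Φ(b) ≤ φ(b)`, which comes from integrating
`x φ(x) = -φ'(x)` over `(-∞, b]`. The same bound gives `e^{2μz} Φ(b) ≤ φ((z - μt)/√t) → 0`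
once `b ≤ -1`, hence the limit.
-/

open MeasureTheory ProbabilityTheory Real

local notation "φ" => gaussianPDFReal 0 1

lemma hasDerivAt_integral_Iic {E : Type*} [NormedAddCommGroup E] [NormedSpace ℝ E]
    [CompleteSpace E] {f : ℝ → E} (hf : Integrable f) (hc : Continuous f) (x : ℝ) :
    HasDerivAt (fun y => ∫ t in Iic y, f t) (f x) x := by
  have hsplit : (fun y => ∫ t in Iic y, f t) =
      fun y => (∫ t in Iic 0, f t) + ∫ t in (0 : ℝ)..y, f t := by
    funext y
    rw [← intervalIntegral.integral_Iic_sub_Iic hf.integrableOn hf.integrableOn,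
      add_sub_cancel]
  rw [hsplit]
  exact (intervalIntegral.integral_hasDerivAt_right hf.intervalIntegrable
    (hc.stronglyMeasurableAtFilter _ _) hc.continuousAt).const_add _

lemma continuous_gaussianPDFReal (m : ℝ) (v : NNReal) : Continuous (gaussianPDFReal m v) := by
  unfold gaussianPDFReal; fun_prop

lemma gaussianPDFReal_zero_one (x : ℝ) : φ x = (√(2 * π))⁻¹ * exp (-x ^ 2 / 2) := by
  simp [gaussianPDFReal]

lemma hasDerivAt_gaussianPDFReal_zero_one (x : ℝ) : HasDerivAt φ (-(x * φ x)) x := by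
  have hexponent : HasDerivAt (fun y : ℝ => -y ^ 2 / 2) (-x) x := by
    refine (((hasDerivAt_pow 2 x).fun_neg).div_const 2).congr_deriv ?_
    push_cast; ring
  rw [show φ = fun x => (√(2 * π))⁻¹ * exp (-x ^ 2 / 2) from funext gaussianPDFReal_zero_one]
  exact (hexponent.exp.const_mul _).congr_deriv (by ring)

lemma integrable_mul_gaussianPDFReal_zero_one : Integrable fun x => x * φ x := by
  refine ((integrable_mul_exp_neg_mul_sq (one_half_pos (α := ℝ))).const_mul
    (√(2 * π))⁻¹).congr (ae_of_all _ fun x => ?_)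
  simp only [gaussianPDFReal_zero_one]
  ring_nf

lemma tendsto_gaussianPDFReal_zero_one_atBot : Tendsto φ atBot (nhds 0) :=
  tendsto_zero_of_hasDerivAt_of_integrableOn_Iic (a := 0)
    (fun x _ => hasDerivAt_gaussianPDFReal_zero_one x)
    integrable_mul_gaussianPDFReal_zero_one.neg.integrableOn
    (integrable_gaussianPDFReal 0 1).integrableOn

lemma tendsto_gaussianPDFReal_zero_one_atTop : Tendsto φ atTop (nhds 0) :=
  tendsto_zero_of_hasDerivAt_of_integrableOn_Ioi (a := 0)
    (fun x _ => hasDerivAt_gaussianPDFReal_zero_one x)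
    integrable_mul_gaussianPDFReal_zero_one.neg.integrableOn
    (integrable_gaussianPDFReal 0 1).integrableOn

lemma setIntegral_Iic_mul_gaussianPDFReal_zero_one (b : ℝ) :
    ∫ x in Iic b, x * φ x = -φ b := by
  have := integral_Iic_of_hasDerivAt_of_tendsto' (a := b)
    (fun x _ => hasDerivAt_gaussianPDFReal_zero_one x)
    integrable_mul_gaussianPDFReal_zero_one.neg.integrableOn
    tendsto_gaussianPDFReal_zero_one_atBot
  rw [integral_neg, sub_zero] at this
  linarith

lemma stdNormalCDF_eq_integral (x : ℝ) : stdNormalCDF x = ∫ t in Iic x, φ t := by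
  simp only [stdNormalCDF, gaussianPDFReal_zero_one]

lemma stdNormalCDF_eq_cdf : stdNormalCDF = cdf (gaussianReal 0 1) := by
  funext x
  rw [cdf_eq_real, measureReal_def, gaussianReal_apply_eq_integral _ one_ne_zero,
    ENNReal.toReal_ofReal (setIntegral_nonneg measurableSet_Iic fun _ _ =>
      gaussianPDFReal_nonneg _ _ _), stdNormalCDF_eq_integral]

lemma hasDerivAt_stdNormalCDF (x : ℝ) : HasDerivAt stdNormalCDF (φ x) x := by
  rw [funext stdNormalCDF_eq_integral]
  exact hasDerivAt_integral_Iic (integrable_gaussianPDFReal 0 1)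
    (continuous_gaussianPDFReal 0 1) x

lemma stdNormalCDF_nonneg (x : ℝ) : 0 ≤ stdNormalCDF x := by
  rw [stdNormalCDF_eq_cdf]
  exact cdf_nonneg _ x

lemma tendsto_stdNormalCDF_atTop : Tendsto stdNormalCDF atTop (nhds 1) := by
  rw [stdNormalCDF_eq_cdf]
  exact tendsto_cdf_atTop _

lemma neg_mul_stdNormalCDF_le (b : ℝ) : -b * stdNormalCDF b ≤ φ b := by
  rcases le_or_gt 0 b with hb | hb
  · nlinarith [stdNormalCDF_nonneg b, gaussianPDFReal_nonneg 0 1 b]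
  calc -b * stdNormalCDF b = ∫ x in Iic b, -b * φ x := by
        rw [stdNormalCDF_eq_integral, integral_const_mul]
    _ ≤ ∫ x in Iic b, -(x * φ x) :=
        setIntegral_mono_on ((integrable_gaussianPDFReal 0 1).const_mul _).integrableOn
          integrable_mul_gaussianPDFReal_zero_one.neg.integrableOn measurableSet_Iic
          fun x hx => by nlinarith [gaussianPDFReal_nonneg 0 1 x, mem_Iic.1 hx]
    _ = φ b := by rw [integral_neg, setIntegral_Iic_mul_gaussianPDFReal_zero_one, neg_neg]

lemma stdNormalCDF_le_gaussianPDFReal {b : ℝ} (hb : b ≤ -1) : stdNormalCDF b ≤ φ b :=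
  calc stdNormalCDF b ≤ -b * stdNormalCDF b :=
        le_mul_of_one_le_left (stdNormalCDF_nonneg b) (by linarith)
    _ ≤ φ b := neg_mul_stdNormalCDF_le b

section Fmu

variable {μ t : ℝ}

lemma exp_mul_gaussianPDFReal_reflect (ht : 0 < t) (z : ℝ) :
    exp (2 * μ * z) * φ ((-z - μ * t) / √t) = φ ((z - μ * t) / √t) := by
  have hst : √t ^ 2 = t := sq_sqrt ht.le
  have hst' : √t ≠ 0 := (sqrt_pos.2 ht).ne'
  simp only [gaussianPDFReal_zero_one]
  rw [mul_left_comm, ← exp_add, div_pow, div_pow, hst]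
  congr 2
  field_simp
  ring

lemma hasDerivAt_Fmu (ht : 0 < t) (z : ℝ) :
    HasDerivAt (Fmu μ t) (2 * exp (2 * μ * z) / √t *
      (φ ((-z - μ * t) / √t) - μ * √t * stdNormalCDF ((-z - μ * t) / √t))) z := by
  have hst : √t ≠ 0 := (sqrt_pos.2 ht).ne'
  have hA := (hasDerivAt_stdNormalCDF _).comp z
    (((hasDerivAt_id z).sub_const (μ * t)).div_const √t)
  have hB := (hasDerivAt_stdNormalCDF _).comp z
    (((hasDerivAt_id z).neg.sub_const (μ * t)).div_const √t)
  have hE := ((hasDerivAt_id z).const_mul (2 * μ)).exp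
  refine (hA.sub (hE.mul hB)).congr_deriv ?_
  simp only [id, Function.comp_apply, Pi.neg_apply]
  rw [← exp_mul_gaussianPDFReal_reflect ht z]
  field_simp
  ring

lemma deriv_Fmu_nonneg (ht : 0 < t) {z : ℝ} (hz : 0 ≤ z) :
    0 ≤ 2 * exp (2 * μ * z) / √t *
      (φ ((-z - μ * t) / √t) - μ * √t * stdNormalCDF ((-z - μ * t) / √t)) := by
  have hst : 0 < √t := sqrt_pos.2 ht
  set b := (-z - μ * t) / √t
  have hdrift : μ * √t ≤ -b := by
    have : -b = z / √t + μ * (t / √t) := by ring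
    rw [this, div_sqrt]
    linarith [div_nonneg hz hst.le]
  have : μ * √t * stdNormalCDF b ≤ φ b :=
    (mul_le_mul_of_nonneg_right hdrift (stdNormalCDF_nonneg b)).trans (neg_mul_stdNormalCDF_le b)
  exact mul_nonneg (by positivity) (sub_nonneg.2 this)

lemma monotoneOn_Fmu (ht : 0 < t) : MonotoneOn (Fmu μ t) (Ici 0) := by
  refine monotoneOn_of_deriv_nonneg (convex_Ici 0)
    (fun z _ => (hasDerivAt_Fmu ht z).continuousAt.continuousWithinAt)
    (fun z _ => (hasDerivAt_Fmu ht z).differentiableAt.differentiableWithinAt) fun z hz => ?_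
  rw [interior_Ici] at hz
  rw [(hasDerivAt_Fmu ht z).deriv]
  exact deriv_Fmu_nonneg ht (le_of_lt hz)

lemma tendsto_Fmu_atTop (ht : 0 < t) : Tendsto (Fmu μ t) atTop (nhds 1) := by
  have hst : 0 < √t := sqrt_pos.2 ht
  have ha : Tendsto (fun z => (z - μ * t) / √t) atTop atTop :=
    (tendsto_atTop_add_const_right _ _ tendsto_id).atTop_div_const hst
  have hb : Tendsto (fun z => (-z - μ * t) / √t) atTop atBot := by
    simpa only [sub_eq_add_neg] using
      (tendsto_atBot_add_const_right _ (-(μ * t)) tendsto_neg_atTop_atBot).atBot_div_const hst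
  have hreflected : Tendsto (fun z => exp (2 * μ * z) * stdNormalCDF ((-z - μ * t) / √t))
      atTop (nhds 0) := by
    refine tendsto_of_tendsto_of_tendsto_of_le_of_le' tendsto_const_nhds
      (tendsto_gaussianPDFReal_zero_one_atTop.comp ha)
      (Eventually.of_forall fun z => mul_nonneg (exp_pos _).le (stdNormalCDF_nonneg _)) ?_
    filter_upwards [hb.eventually_le_atBot (-1)] with z hz
    rw [Function.comp_apply, ← exp_mul_gaussianPDFReal_reflect ht z]
    exact mul_le_mul_of_nonneg_left (stdNormalCDF_le_gaussianPDFReal hz) (exp_pos _).le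
  have := (tendsto_stdNormalCDF_atTop.comp ha).sub hreflected
  rwa [sub_zero] at this

end Fmu

/-- for fixed `t > 0`, `F^μ(t, ·)` vanishes at `0`, is nondecreasing
on `[0, ∞)` and tends to `1` at `∞`. -/
theorem Fmu_is_cdf_on_nonneg (μ t : ℝ) (ht : 0 < t) :
    Fmu μ t 0 = 0 ∧
    (∀ z₁ z₂, 0 ≤ z₁ → z₁ ≤ z₂ → Fmu μ t z₁ ≤ Fmu μ t z₂) ∧
    Tendsto (fun z => Fmu μ t z) atTop (nhds 1) :=
  ⟨by simp [Fmu], fun _ _ h₁ h₁₂ => monotoneOn_Fmu ht h₁ (h₁.trans h₁₂) h₁₂,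
    tendsto_Fmu_atTop ht⟩
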